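/- Every interval order is shellable; that is, if P is a finite poset containing no induced subposet isomorphic to the disjoint union of two 2-element chains, then the order complex of P is shellable. -/

import Mathlib

open Finset

variable {V : Type*} [DecidableEq V]

/-- A (finite abstract) simplicial complex: a finset of finsets closed under subsets. -/
def IsComplex (K : Finset (Finset V)) : Prop :=
  ∀ F ∈ K, ∀ G ⊆ F, G ∈ K

/-- The facets (maximal faces) of a complex. -/
def facets (K : Finset (Finset V)) : Finset (Finset V) := by
  classical exact K.filter (fun F => ∀ G ∈ K, F ⊆ G → F = G)

/-- `L` is a shelling order of the facets of `K`: for each `i ≥ 2` (0-indexed `i ≥ 1`),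
the intersection of the closed simplex on `F_i` with the union of the previous closed simplices
is pure of dimension `dim F_i - 1`: every face `G` of the intersection is contained in a face `H`
of the intersection with `H.card = F_i.card - 1`. -/
def IsShelling (K : Finset (Finset V)) (L : List (Finset V)) : Prop :=
  L.Nodup ∧ L.toFinset = facets K ∧
  ∀ i : Fin L.length, i.1 ≠ 0 → ∀ G ⊆ L.get i,
    (∃ j : Fin L.length, j < i ∧ G ⊆ L.get j) →
    ∃ H, G ⊆ H ∧ H ⊆ L.get i ∧ H.card + 1 = (L.get i).card ∧
      ∃ j : Fin L.length, j < i ∧ H ⊆ L.get j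

/-- A complex is shellable if it admits a shelling order of its facets. -/
def Shellable (K : Finset (Finset V)) : Prop := ∃ L, IsShelling K L

/-- The subcomplex of `K` induced by a vertex subset `U`. -/
def inducedSub (K : Finset (Finset V)) (U : Finset V) : Finset (Finset V) :=
  K.filter (fun F => F ⊆ U)

/-- The vertex set of a complex. -/
def verts (K : Finset (Finset V)) : Finset V := K.sup id

/-- The link of a vertex `v` in `K`. -/
def link (K : Finset (Finset V)) (v : V) : Finset (Finset V) :=
  K.filter (fun F => v ∉ F ∧ insert v F ∈ K)

/-- A complex is pure if all of its facets have the same dimension. -/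
def IsPure (K : Finset (Finset V)) : Prop :=
  ∀ F ∈ facets K, ∀ G ∈ facets K, F.card = G.card

/-- A poset is `(2+2)`-free (an interval order) if it contains no induced subposet
isomorphic to the disjoint union of two 2-element chains. -/
def TwoPlusTwoFree (P : Type*) [Preorder P] : Prop :=
  ¬ ∃ a b c d : P, a < b ∧ c < d ∧
    ¬ a ≤ c ∧ ¬ c ≤ a ∧ ¬ a ≤ d ∧ ¬ d ≤ a ∧ ¬ b ≤ c ∧ ¬ c ≤ b ∧ ¬ b ≤ d ∧ ¬ d ≤ b

/-- The order complex of a finite poset restricted to a finset `S` of its elements: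
the simplicial complex of chains contained in `S`. -/
noncomputable def orderComplexOn {P : Type*} [Fintype P] [PartialOrder P] [DecidableEq P]
    (S : Finset P) : Finset (Finset P) := by
  classical exact S.powerset.filter (fun F => IsChain (· ≤ ·) (F : Set P))

set_option linter.unusedSectionVars false
set_option linter.unusedVariables false

namespace Stmt14Aux

variable {α β : Type*}

/-- `E` occurs strictly before `F` in the list `L`. -/
def Before (L : List α) (E F : α) : Prop :=
  ∃ l1 l2 : List α, L = l1 ++ l2 ∧ E ∈ l1 ∧ F ∈ l2

theorem Before.mem_left {L : List α} {E F : α} (h : Before L E F) : E ∈ L := by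
  obtain ⟨l1, l2, rfl, h1, h2⟩ := h; exact List.mem_append_left _ h1

theorem Before.mem_right {L : List α} {E F : α} (h : Before L E F) : F ∈ L := by
  obtain ⟨l1, l2, rfl, h1, h2⟩ := h; exact List.mem_append_right _ h2

theorem before_append_left {A B : List α} {E F : α} (h : Before A E F) :
    Before (A ++ B) E F := by
  obtain ⟨l1, l2, rfl, h1, h2⟩ := h
  exact ⟨l1, l2 ++ B, by simp, h1, List.mem_append_left _ h2⟩

theorem before_append_right {A B : List α} {E F : α} (h : Before B E F) :
    Before (A ++ B) E F := by
  obtain ⟨l1, l2, rfl, h1, h2⟩ := h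
  exact ⟨A ++ l1, l2, by simp, List.mem_append_right _ h1, h2⟩

theorem before_append_cross {A B : List α} {E F : α} (hE : E ∈ A) (hF : F ∈ B) :
    Before (A ++ B) E F := ⟨A, B, rfl, hE, hF⟩

theorem before_map {A : List α} {E F : α} (f : α → β) (h : Before A E F) :
    Before (A.map f) (f E) (f F) := by
  obtain ⟨l1, l2, rfl, h1, h2⟩ := h
  exact ⟨l1.map f, l2.map f, by simp, List.mem_map_of_mem (f := f) h1, List.mem_map_of_mem (f := f) h2⟩

theorem before_append_left_elim {A B : List α} {E F : α} (hnd : (A ++ B).Nodup)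
    (hF : F ∈ A) (h : Before (A ++ B) E F) : Before A E F := by
  obtain ⟨l1, l2, heq, h1, h2⟩ := h
  have hFB : F ∉ B := fun hB => List.disjoint_of_nodup_append hnd hF hB
  rcases List.append_eq_append_iff.1 heq.symm with ⟨a', ha1, ha2⟩ | ⟨c, hc1, hc2⟩
  · subst ha1; subst ha2
    rcases List.mem_append.1 h2 with h2' | h2'
    · exact ⟨l1, a', rfl, h1, h2'⟩
    · exact absurd h2' hFB
  · subst hc1; subst hc2
    exact absurd (List.mem_append_right _ h2) hFB

theorem before_append_right_elim {A B : List α} {E F : α}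
    (h : Before (A ++ B) E F) : E ∈ A ∨ Before B E F := by
  obtain ⟨l1, l2, heq, h1, h2⟩ := h
  rcases List.append_eq_append_iff.1 heq.symm with ⟨a', ha1, ha2⟩ | ⟨c, hc1, hc2⟩
  · subst ha1; exact Or.inl (List.mem_append_left _ h1)
  · subst hc1; subst hc2
    rcases List.mem_append.1 h1 with h1' | h1'
    · exact Or.inl h1'
    · exact Or.inr ⟨c, l2, rfl, h1', h2⟩

theorem before_map_elim {A : List α} {f : α → β} {E F : β}
    (h : Before (A.map f) E F) :
    ∃ E' F', Before A E' F' ∧ E = f E' ∧ F = f F' := by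
  obtain ⟨l1, l2, heq, h1, h2⟩ := h
  obtain ⟨a1, a2, rfl, rfl, rfl⟩ := List.map_eq_append_iff.1 heq
  obtain ⟨E', hE', rfl⟩ := List.mem_map.1 h1
  obtain ⟨F', hF', rfl⟩ := List.mem_map.1 h2
  exact ⟨E', F', ⟨a1, a2, rfl, hE', hF'⟩, rfl, rfl⟩

theorem filter_eq_append {p : α → Bool} {B l1 l2 : List α}
    (h : B.filter p = l1 ++ l2) :
    ∃ b1 b2, B = b1 ++ b2 ∧ b1.filter p = l1 ∧ b2.filter p = l2 := by
  induction B generalizing l1 l2 with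
  | nil =>
    obtain ⟨rfl, rfl⟩ := List.append_eq_nil_iff.1 h.symm
    exact ⟨[], [], rfl, rfl, rfl⟩
  | cons a B ih =>
    by_cases hp : p a
    · rw [List.filter_cons_of_pos hp] at h
      cases l1 with
      | nil =>
        refine ⟨[], a :: B, rfl, rfl, ?_⟩
        rw [List.filter_cons_of_pos hp]
        simpa using h
      | cons x l1' =>
        simp only [List.cons_append, List.cons.injEq] at h
        obtain ⟨rfl, h⟩ := h
        obtain ⟨b1, b2, rfl, hb1, hb2⟩ := ih h
        exact ⟨a :: b1, b2, rfl, by rw [List.filter_cons_of_pos hp, hb1], hb2⟩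
    · rw [List.filter_cons_of_neg (by simpa using hp)] at h
      obtain ⟨b1, b2, rfl, hb1, hb2⟩ := ih h
      exact ⟨a :: b1, b2, rfl, by rw [List.filter_cons_of_neg (by simpa using hp), hb1], hb2⟩

theorem before_filter_elim {p : α → Bool} {B : List α} {E F : α}
    (h : Before (B.filter p) E F) : Before B E F := by
  obtain ⟨l1, l2, heq, h1, h2⟩ := h
  obtain ⟨b1, b2, rfl, hb1, hb2⟩ := filter_eq_append heq
  exact ⟨b1, b2, rfl, List.mem_of_mem_filter (hb1 ▸ h1), List.mem_of_mem_filter (hb2 ▸ h2)⟩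

theorem before_filter {p : α → Bool} {B : List α} {E F : α}
    (h : Before B E F) (hE : p E) (hF : p F) : Before (B.filter p) E F := by
  obtain ⟨l1, l2, rfl, h1, h2⟩ := h
  exact ⟨l1.filter p, l2.filter p, by simp, List.mem_filter.2 ⟨h1, hE⟩,
    List.mem_filter.2 ⟨h2, hF⟩⟩

theorem before_get_iff {L : List α} (hL : L.Nodup) (i : Fin L.length) (Q : α → Prop) :
    (∃ j : Fin L.length, j < i ∧ Q (L.get j)) ↔ ∃ E, Before L E (L.get i) ∧ Q E := by
  constructor
  · rintro ⟨j, hj, hQ⟩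
    have hj' : (j : ℕ) < (i : ℕ) := hj
    have hjL : (j : ℕ) < L.length := j.2
    have hiL : (i : ℕ) < L.length := i.2
    refine ⟨L.get j, ⟨L.take i, L.drop i, (List.take_append_drop _ _).symm, ?_, ?_⟩, hQ⟩
    · have hlen : (j : ℕ) < (L.take (i : ℕ)).length := by
        rw [List.length_take]; omega
      have hmem := List.getElem_mem hlen
      simpa [List.getElem_take, List.get_eq_getElem] using hmem
    · have hlen : 0 < (L.drop (i : ℕ)).length := by
        rw [List.length_drop]; omega
      have hmem := List.getElem_mem hlen
      simpa [List.getElem_drop, List.get_eq_getElem] using hmem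
  · rintro ⟨E, ⟨l1, l2, heq, h1, h2⟩, hQ⟩
    subst heq
    obtain ⟨k, hk⟩ := List.mem_iff_get.1 h1
    obtain ⟨m, hm⟩ := List.mem_iff_get.1 h2
    have hkL : (k : ℕ) < (l1 ++ l2).length := by
      have := k.2; simp only [List.length_append]; omega
    have hmL : l1.length + (m : ℕ) < (l1 ++ l2).length := by
      have := m.2; simp only [List.length_append]; omega
    have hgk : (l1 ++ l2).get ⟨k, hkL⟩ = E := by
      rw [← hk]; simp only [List.get_eq_getElem]
      exact List.getElem_append_left k.2
    have hgm : (l1 ++ l2).get ⟨l1.length + m, hmL⟩ = (l1 ++ l2).get i := by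
      rw [← hm]; simp only [List.get_eq_getElem]
      rw [List.getElem_append_right (by omega)]
      congr 1; omega
    have hie : (⟨l1.length + m, hmL⟩ : Fin (l1 ++ l2).length) = i := (hL.get_inj_iff).1 hgm
    refine ⟨⟨k, hkL⟩, ?_, hgk ▸ hQ⟩
    rw [← hie]
    exact Fin.mk_lt_mk.2 (by omega)




open Stmt14Aux

theorem mem_facets_iff {V : Type*} [DecidableEq V] {K : Finset (Finset V)} {F : Finset V} :
    F ∈ facets K ↔ F ∈ K ∧ ∀ G ∈ K, F ⊆ G → F = G := by
  classical
  simp [facets, Finset.mem_filter]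

theorem exists_facet_superset {V : Type*} [DecidableEq V] {K : Finset (Finset V)}
    {G : Finset V} (hG : G ∈ K) : ∃ F ∈ facets K, G ⊆ F := by
  classical
  obtain ⟨m, hm, hmax⟩ := (K.filter (fun F => G ⊆ F)).exists_maximal
    ⟨G, Finset.mem_filter.2 ⟨hG, Finset.Subset.refl G⟩⟩
  rw [Finset.mem_filter] at hm
  refine ⟨m, mem_facets_iff.2 ⟨hm.1, ?_⟩, hm.2⟩
  intro G' hG' hsub
  by_contra hne
  exact hne (le_antisymm hsub (hmax (Finset.mem_filter.2 ⟨hG', hm.2.trans hsub⟩)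
    hsub))

theorem isShelling_of_forall_before {V : Type*} [DecidableEq V] {K : Finset (Finset V)}
    {L : List (Finset V)} (h1 : L.Nodup) (h2 : L.toFinset = facets K)
    (h3 : ∀ F ∈ L, ∀ G ⊆ F, (∃ E, Before L E F ∧ G ⊆ E) →
      ∃ H, G ⊆ H ∧ H ⊆ F ∧ H.card + 1 = F.card ∧ ∃ E, Before L E F ∧ H ⊆ E) :
    IsShelling K L := by
  refine ⟨h1, h2, ?_⟩
  intro i _ G hG hprev
  obtain ⟨H, h4, h5, h6, h7⟩ := h3 (L.get i) (L.get_mem _) G hG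
    ((before_get_iff h1 i _).1 hprev)
  exact ⟨H, h4, h5, h6, (before_get_iff h1 i _).2 h7⟩

theorem forall_before_of_isShelling {V : Type*} [DecidableEq V] {K : Finset (Finset V)}
    {L : List (Finset V)} (hS : IsShelling K L) :
    ∀ F ∈ L, ∀ G ⊆ F, (∃ E, Before L E F ∧ G ⊆ E) →
      ∃ H, G ⊆ H ∧ H ⊆ F ∧ H.card + 1 = F.card ∧ ∃ E, Before L E F ∧ H ⊆ E := by
  obtain ⟨h1, h2, h3⟩ := hS
  intro F hF G hG hprev
  obtain ⟨i, hi⟩ := List.mem_iff_get.1 hF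
  subst hi
  have hprev' := (before_get_iff h1 i _).2 hprev
  have hi0 : (i : ℕ) ≠ 0 := by
    obtain ⟨j, hj, -⟩ := hprev'
    have : (j : ℕ) < (i : ℕ) := hj
    omega
  obtain ⟨H, h4, h5, h6, h7⟩ := h3 i hi0 G hG hprev'
  exact ⟨H, h4, h5, h6, (before_get_iff h1 i _).1 h7⟩

variable {P : Type*} [Fintype P] [PartialOrder P] [DecidableEq P]

theorem mem_orderComplexOn {S F : Finset P} :
    F ∈ orderComplexOn S ↔ F ⊆ S ∧ IsChain (· ≤ ·) (F : Set P) := by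
  classical
  simp [orderComplexOn, Finset.mem_filter, Finset.mem_powerset]

theorem upset_comp (h : TwoPlusTwoFree P) (x z : P) :
    (∀ w, x < w → z < w) ∨ (∀ w, z < w → x < w) := by
  by_contra hc
  push_neg at hc
  obtain ⟨⟨b, hxb, hzb⟩, ⟨d, hzd, hxd⟩⟩ := hc
  refine h ⟨x, b, z, d, hxb, hzd, ?_, ?_, ?_, ?_, ?_, ?_, ?_, ?_⟩
  · intro hle; exact hxd (lt_of_le_of_lt hle hzd)
  · intro hle; exact hzb (lt_of_le_of_lt hle hxb)
  · intro hle
    rcases hle.lt_or_eq with h' | h'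
    · exact hxd h'
    · exact hzb (lt_trans (h' ▸ hzd) hxb)
  · intro hle; exact hzb (lt_of_lt_of_le hzd (hle.trans hxb.le))
  · intro hle; exact hxd (lt_of_lt_of_le hxb (hle.trans hzd.le))
  · intro hle
    rcases hle.lt_or_eq with h' | h'
    · exact hzb h'
    · exact hxd (lt_trans (h' ▸ hxb) hzd)
  · intro hle; exact hxd (lt_of_lt_of_le hxb hle)
  · intro hle; exact hzb (lt_of_lt_of_le hzd hle)

theorem exists_bottom (h : TwoPlusTwoFree P) {S : Finset P} (hS : S.Nonempty) :
    ∃ a0 ∈ S, (∀ x ∈ S, ¬ x < a0) ∧ ∀ y ∈ S, (∃ x ∈ S, x < y) → a0 < y := by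
  classical
  obtain ⟨a0, ha0S, hmax⟩ := S.exists_max_image (fun x => (S.filter (x < ·)).card) hS
  have key : ∀ x ∈ S, S.filter (x < ·) ⊆ S.filter (a0 < ·) := by
    intro x hx
    rcases upset_comp h x a0 with hc | hc
    · intro w hw
      rw [Finset.mem_filter] at *
      exact ⟨hw.1, hc _ hw.2⟩
    · have hsub : S.filter (a0 < ·) ⊆ S.filter (x < ·) := by
        intro w hw
        rw [Finset.mem_filter] at *
        exact ⟨hw.1, hc _ hw.2⟩
      rw [Finset.eq_of_subset_of_card_le hsub (hmax x hx)]
  refine ⟨a0, ha0S, ?_, ?_⟩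
  · intro x hx hlt
    have : a0 ∈ S.filter (a0 < ·) := key x hx (Finset.mem_filter.2 ⟨ha0S, hlt⟩)
    exact lt_irrefl a0 (Finset.mem_filter.1 this).2
  · rintro y hy ⟨x, hx, hxy⟩
    exact (Finset.mem_filter.1 (key x hx (Finset.mem_filter.2 ⟨hy, hxy⟩))).2



section Decomp

open scoped Classical

variable {P : Type*} [Fintype P] [PartialOrder P] [DecidableEq P] {S : Finset P} {a0 : P}

/-- Adjoining the bottom element `a0` to a chain in `S' = S.filter (a0 < ·)`. -/
theorem cone_mem (ha0S : a0 ∈ S) {C : Finset P}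
    (hC : C ∈ orderComplexOn (S.filter (a0 < ·))) :
    insert a0 C ∈ orderComplexOn S := by
  rw [mem_orderComplexOn] at hC ⊢
  obtain ⟨h1, h2⟩ := hC
  refine ⟨Finset.insert_subset ha0S (h1.trans (S.filter_subset _)), ?_⟩
  rw [Finset.coe_insert]
  refine h2.insert ?_
  intro b hb _
  exact Or.inl (le_of_lt (Finset.mem_filter.1 (h1 (Finset.mem_coe.1 hb))).2)

theorem chain_sub {F G : Finset P} (hF : IsChain (· ≤ ·) (F : Set P)) (hGF : G ⊆ F) :
    IsChain (· ≤ ·) (G : Set P) :=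
  hF.mono (Finset.coe_subset.2 hGF)

theorem orderComplexOn_mono {S T : Finset P} (hST : S ⊆ T) {F : Finset P}
    (hF : F ∈ orderComplexOn S) : F ∈ orderComplexOn T := by
  rw [mem_orderComplexOn] at hF ⊢
  exact ⟨hF.1.trans hST, hF.2⟩

/-- In a chain containing `a0`, every other element lies strictly above `a0`. -/
theorem erase_subset_filter (hnb : ∀ x ∈ S, ¬ x < a0) {G : Finset P}
    (hG : G ∈ orderComplexOn S) (ha0G : a0 ∈ G) :
    G.erase a0 ⊆ S.filter (a0 < ·) := by
  intro x hx
  obtain ⟨hxne, hxG⟩ := Finset.mem_erase.1 hx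
  rw [mem_orderComplexOn] at hG
  have hxS : x ∈ S := hG.1 hxG
  have hcomp := hG.2 (Finset.mem_coe.2 hxG) (Finset.mem_coe.2 ha0G) hxne
  rcases hcomp with hle | hle
  · exact absurd (lt_of_le_of_ne hle hxne) (hnb x hxS)
  · exact Finset.mem_filter.2 ⟨hxS, lt_of_le_of_ne hle (Ne.symm hxne)⟩

theorem facet_cone (ha0S : a0 ∈ S) (hnb : ∀ x ∈ S, ¬ x < a0) {C : Finset P}
    (hC : C ∈ facets (orderComplexOn (S.filter (a0 < ·)))) :
    insert a0 C ∈ facets (orderComplexOn S) := by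
  rw [mem_facets_iff] at hC ⊢
  obtain ⟨hCmem, hCmax⟩ := hC
  have hCS' : C ⊆ S.filter (a0 < ·) := (mem_orderComplexOn.1 hCmem).1
  have ha0C : a0 ∉ C := fun hc => lt_irrefl a0 (Finset.mem_filter.1 (hCS' hc)).2
  refine ⟨cone_mem ha0S hCmem, ?_⟩
  intro G hG hsub
  have ha0G : a0 ∈ G := hsub (Finset.mem_insert_self _ _)
  have hGe : G.erase a0 ∈ orderComplexOn (S.filter (a0 < ·)) := by
    rw [mem_orderComplexOn]
    exact ⟨erase_subset_filter hnb hG ha0G,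
      chain_sub (mem_orderComplexOn.1 hG).2 (Finset.erase_subset _ _)⟩
  have hCe : C ⊆ G.erase a0 := fun x hx => Finset.mem_erase.2
    ⟨fun he => ha0C (he ▸ hx), hsub (Finset.mem_insert_of_mem hx)⟩
  rw [hCmax _ hGe hCe]
  exact Finset.insert_erase ha0G

theorem facet_erase (ha0S : a0 ∈ S) (hnb : ∀ x ∈ S, ¬ x < a0) {F : Finset P}
    (hF : F ∈ facets (orderComplexOn S)) (ha0F : a0 ∈ F) :
    F.erase a0 ∈ facets (orderComplexOn (S.filter (a0 < ·))) := by
  rw [mem_facets_iff] at hF ⊢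
  obtain ⟨hFmem, hFmax⟩ := hF
  refine ⟨?_, ?_⟩
  · rw [mem_orderComplexOn]
    exact ⟨erase_subset_filter hnb hFmem ha0F,
      chain_sub (mem_orderComplexOn.1 hFmem).2 (Finset.erase_subset _ _)⟩
  · intro G hG hsub
    have ha0G : a0 ∉ G := fun hc =>
      lt_irrefl a0 (Finset.mem_filter.1 ((mem_orderComplexOn.1 hG).1 hc)).2
    have hFsub : F ⊆ insert a0 G := by
      intro x hx
      by_cases hxa : x = a0
      · exact hxa ▸ Finset.mem_insert_self _ _
      · exact Finset.mem_insert_of_mem (hsub (Finset.mem_erase.2 ⟨hxa, hx⟩))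
    rw [hFmax _ (cone_mem ha0S hG) hFsub]
    exact Finset.erase_insert ha0G

theorem facet_no_a0 (ha0S : a0 ∈ S) (hnb : ∀ x ∈ S, ¬ x < a0) {F : Finset P}
    (hF : F ∈ facets (orderComplexOn S)) (ha0F : a0 ∉ F) :
    F ∈ facets (orderComplexOn (S.erase a0)) ∧ ¬ F ⊆ S.filter (a0 < ·) := by
  rw [mem_facets_iff] at hF
  obtain ⟨hFmem, hFmax⟩ := hF
  constructor
  · rw [mem_facets_iff]
    refine ⟨?_, ?_⟩
    · rw [mem_orderComplexOn] at hFmem ⊢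
      exact ⟨fun x hx => Finset.mem_erase.2 ⟨fun he => ha0F (he ▸ hx), hFmem.1 hx⟩, hFmem.2⟩
    · intro G hG hsub
      exact hFmax _ (orderComplexOn_mono (Finset.erase_subset _ _) hG) hsub
  · intro hFS'
    have : F ∈ orderComplexOn (S.filter (a0 < ·)) := by
      rw [mem_orderComplexOn] at hFmem ⊢
      exact ⟨hFS', hFmem.2⟩
    have heq := hFmax _ (cone_mem ha0S this) (Finset.subset_insert _ _)
    exact ha0F (heq ▸ Finset.mem_insert_self a0 F)

theorem facet_keep (ha0S : a0 ∈ S) (hnb : ∀ x ∈ S, ¬ x < a0) {F : Finset P}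
    (hF : F ∈ facets (orderComplexOn (S.erase a0))) (hFS' : ¬ F ⊆ S.filter (a0 < ·)) :
    F ∈ facets (orderComplexOn S) := by
  rw [mem_facets_iff] at hF ⊢
  obtain ⟨hFmem, hFmax⟩ := hF
  refine ⟨orderComplexOn_mono (Finset.erase_subset _ _) hFmem, ?_⟩
  intro G hG hsub
  have ha0G : a0 ∉ G := by
    intro ha0G
    apply hFS'
    intro x hx
    have hxG : x ∈ G := hsub hx
    have hxS : x ∈ S := (mem_orderComplexOn.1 hG).1 hxG
    have hxne : x ≠ a0 := fun he =>
      (Finset.mem_erase.1 ((mem_orderComplexOn.1 hFmem).1 hx)).1 he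
    have hcomp := (mem_orderComplexOn.1 hG).2 (Finset.mem_coe.2 hxG)
      (Finset.mem_coe.2 ha0G) hxne
    rcases hcomp with hle | hle
    · exact absurd (lt_of_le_of_ne hle hxne) (hnb x hxS)
    · exact Finset.mem_filter.2 ⟨hxS, lt_of_le_of_ne hle (Ne.symm hxne)⟩
  refine hFmax _ ?_ hsub
  rw [mem_orderComplexOn] at hG ⊢
  exact ⟨fun x hx => Finset.mem_erase.2 ⟨fun he => ha0G (he ▸ hx), hG.1 hx⟩, hG.2⟩

/-- In a facet of the order complex on `S.erase a0` not contained in `S' = S.filter (a0 < ·)`,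
erasing the unique element outside `S'` lands in `S'`. -/
theorem erase_min_subset (hbe : ∀ y ∈ S, (∃ x ∈ S, x < y) → a0 < y) {F : Finset P}
    (hF : F ∈ orderComplexOn (S.erase a0)) {m : P} (hmF : m ∈ F)
    (hmS' : m ∉ S.filter (a0 < ·)) : F.erase m ⊆ S.filter (a0 < ·) := by
  have hFsub : F ⊆ S.erase a0 := (mem_orderComplexOn.1 hF).1
  have hnolow : ∀ u ∈ F, u ∉ S.filter (a0 < ·) → ∀ w ∈ S, ¬ w < u := by
    intro u huF huS' w hw hwu
    obtain ⟨hune, huS⟩ := Finset.mem_erase.1 (hFsub huF)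
    exact huS' (Finset.mem_filter.2 ⟨huS, hbe u huS ⟨w, hw, hwu⟩⟩)
  intro x hx
  obtain ⟨hxm, hxF⟩ := Finset.mem_erase.1 hx
  by_contra hxS'
  have hxS : x ∈ S := (Finset.mem_erase.1 (hFsub hxF)).2
  have hmS : m ∈ S := (Finset.mem_erase.1 (hFsub hmF)).2
  have hcomp := (mem_orderComplexOn.1 hF).2 (Finset.mem_coe.2 hxF)
    (Finset.mem_coe.2 hmF) hxm
  rcases hcomp with hle | hle
  · exact hnolow m hmF hmS' x hxS (lt_of_le_of_ne hle hxm)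
  · exact hnolow x hxF hxS' m hmS (lt_of_le_of_ne hle (Ne.symm hxm))

end Decomp


theorem shellable_on {P : Type*} [Fintype P] [PartialOrder P] [DecidableEq P]
    (h : TwoPlusTwoFree P) (S : Finset P) : Shellable (orderComplexOn S) := by
  classical
  induction S using Finset.strongInduction with
  | _ S ih =>
  rcases S.eq_empty_or_nonempty with rfl | hS
  · -- base case : the complex is `{∅}` with unique facet `∅`
    have hK : orderComplexOn (∅ : Finset P) = {∅} := by
      ext F
      rw [mem_orderComplexOn]
      simp only [Finset.subset_empty, Finset.mem_singleton]
      constructor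
      · rintro ⟨rfl, -⟩; rfl
      · rintro rfl
        exact ⟨rfl, by simp [IsChain]⟩
    have hfac : facets ({∅} : Finset (Finset P)) = {∅} := by
      ext F
      rw [mem_facets_iff]
      simp only [Finset.mem_singleton]
      constructor
      · rintro ⟨h1, -⟩; exact h1
      · rintro rfl
        exact ⟨rfl, fun G hG _ => hG.symm⟩
    refine ⟨[∅], List.nodup_singleton _, by rw [hK, hfac]; simp, ?_⟩
    intro i hi
    exact absurd (Nat.lt_one_iff.1 i.isLt) hi
  · -- inductive step
    obtain ⟨a0, ha0S, hnb, hbe⟩ := exists_bottom h hS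
    obtain ⟨L1, hL1⟩ := ih (S.filter (a0 < ·))
      (Finset.filter_ssubset.2 ⟨a0, ha0S, lt_irrefl a0⟩)
    obtain ⟨L2, hL2⟩ := ih (S.erase a0) (Finset.erase_ssubset ha0S)
    have hmemL1 : ∀ {C : Finset P}, C ∈ L1 ↔ C ∈ facets (orderComplexOn (S.filter (a0 < ·))) := by
      intro C; rw [← hL1.2.1, List.mem_toFinset]
    have hmemL2 : ∀ {F : Finset P}, F ∈ L2 ↔ F ∈ facets (orderComplexOn (S.erase a0)) := by
      intro F; rw [← hL2.2.1, List.mem_toFinset]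
    have hsubS' : ∀ C ∈ L1, C ⊆ S.filter (a0 < ·) := fun C hC =>
      (mem_orderComplexOn.1 (mem_facets_iff.1 (hmemL1.1 hC)).1).1
    have ha0nS' : ∀ {C : Finset P}, C ⊆ S.filter (a0 < ·) → a0 ∉ C := fun hsub hc =>
      lt_irrefl a0 (Finset.mem_filter.1 (hsub hc)).2
    have ha0nL2 : ∀ F ∈ L2, a0 ∉ F := fun F hF hc =>
      (Finset.mem_erase.1
        ((mem_orderComplexOn.1 (mem_facets_iff.1 (hmemL2.1 hF)).1).1 hc)).1 rfl
    set A : List (Finset P) := L1.map (insert a0) with hAdef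
    set B : List (Finset P) := L2.filter (fun F => decide (¬ F ⊆ S.filter (a0 < ·))) with hBdef
    have hBelim : ∀ {F : Finset P}, F ∈ B → F ∈ L2 ∧ ¬ F ⊆ S.filter (a0 < ·) := by
      intro F hF
      obtain ⟨h1, h2⟩ := List.mem_filter.1 hF
      exact ⟨h1, of_decide_eq_true h2⟩
    have hAnd : A.Nodup := by
      refine hL1.1.map_on ?_
      intro x hx y hy hxy
      rw [← Finset.erase_insert (ha0nS' (hsubS' x hx)), hxy,
        Finset.erase_insert (ha0nS' (hsubS' y hy))]
    have hnd : (A ++ B).Nodup := by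
      refine hAnd.append (hL2.1.filter _) ?_
      intro F hFA hFB
      obtain ⟨C, hC, rfl⟩ := List.mem_map.1 hFA
      exact ha0nL2 _ (hBelim hFB).1 (Finset.mem_insert_self _ _)
    have htoF : (A ++ B).toFinset = facets (orderComplexOn S) := by
      ext F
      rw [List.toFinset_append, Finset.mem_union, List.mem_toFinset, List.mem_toFinset]
      constructor
      · rintro (hFA | hFB)
        · obtain ⟨C, hC, rfl⟩ := List.mem_map.1 hFA
          exact facet_cone ha0S hnb (hmemL1.1 hC)
        · obtain ⟨h1, h2⟩ := hBelim hFB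
          exact facet_keep ha0S hnb (hmemL2.1 h1) h2
      · intro hF
        by_cases ha0F : a0 ∈ F
        · left
          exact List.mem_map.2 ⟨F.erase a0, hmemL1.2 (facet_erase ha0S hnb hF ha0F),
            Finset.insert_erase ha0F⟩
        · right
          obtain ⟨h1, h2⟩ := facet_no_a0 ha0S hnb hF ha0F
          exact List.mem_filter.2 ⟨hmemL2.2 h1, decide_eq_true h2⟩
    refine ⟨A ++ B, isShelling_of_forall_before hnd htoF ?_⟩
    intro F hF G hG hprev
    obtain ⟨E, hEbef, hGE⟩ := hprev
    rcases List.mem_append.1 hF with hFA | hFB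
    · -- `F` is a facet of the cone over `a0`
      obtain ⟨C, hCL1, rfl⟩ := List.mem_map.1 hFA
      have ha0C : a0 ∉ C := ha0nS' (hsubS' C hCL1)
      have hEbefA : Before A E (insert a0 C) := before_append_left_elim hnd hFA hEbef
      obtain ⟨C', C'', hbef', hEeq, hFeq⟩ := before_map_elim hEbefA
      have hC''L1 : C'' ∈ L1 := hbef'.mem_right
      have hCC : C = C'' := by
        rw [← Finset.erase_insert ha0C, hFeq, Finset.erase_insert (ha0nS' (hsubS' _ hC''L1))]
      subst hCC
      have hC'L1 : C' ∈ L1 := hbef'.mem_left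
      have hGeC : G.erase a0 ⊆ C := by
        intro x hx
        obtain ⟨hxne, hxG⟩ := Finset.mem_erase.1 hx
        rcases Finset.mem_insert.1 (hG hxG) with h' | h'
        · exact absurd h' hxne
        · exact h'
      have hGeC' : G.erase a0 ⊆ C' := by
        intro x hx
        obtain ⟨hxne, hxG⟩ := Finset.mem_erase.1 hx
        rcases Finset.mem_insert.1 (hEeq ▸ hGE hxG) with h' | h'
        · exact absurd h' hxne
        · exact h'
      obtain ⟨H', h1, h2, h3, E2, hbef2, h4⟩ :=
        forall_before_of_isShelling hL1 C hCL1 (G.erase a0) hGeC ⟨C', hbef', hGeC'⟩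
      have ha0H' : a0 ∉ H' := ha0nS' (h2.trans (hsubS' C hCL1))
      refine ⟨insert a0 H', ?_, Finset.insert_subset_insert _ h2, ?_,
        insert a0 E2, before_append_left (before_map _ hbef2), Finset.insert_subset_insert _ h4⟩
      · intro x hx
        by_cases hxa : x = a0
        · exact hxa ▸ Finset.mem_insert_self _ _
        · exact Finset.mem_insert_of_mem (h1 (Finset.mem_erase.2 ⟨hxa, hx⟩))
      · rw [Finset.card_insert_of_notMem ha0H', Finset.card_insert_of_notMem ha0C]
        omega
    · -- `F` is a kept facet of the complex on `S.erase a0`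
      obtain ⟨hFL2, hFnS'⟩ := hBelim hFB
      have hFfac2 := hmemL2.1 hFL2
      have hFmem2 : F ∈ orderComplexOn (S.erase a0) := (mem_facets_iff.1 hFfac2).1
      have ha0F : a0 ∉ F := ha0nL2 F hFL2
      obtain ⟨m, hmF, hmS'⟩ := Finset.not_subset.1 hFnS'
      have hFm : F.erase m ⊆ S.filter (a0 < ·) := erase_min_subset hbe hFmem2 hmF hmS'
      have hFmC : F.erase m ∈ orderComplexOn (S.filter (a0 < ·)) :=
        mem_orderComplexOn.2 ⟨hFm,
          chain_sub (mem_orderComplexOn.1 hFmem2).2 (Finset.erase_subset _ _)⟩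
      obtain ⟨Cs, hCsfac, hCs⟩ := exists_facet_superset hFmC
      have hcross : Before (A ++ B) (insert a0 Cs) F :=
        before_append_cross (List.mem_map_of_mem (hmemL1.2 hCsfac)) hFB
      by_cases hGS' : G ⊆ S.filter (a0 < ·)
      · refine ⟨F.erase m, ?_, Finset.erase_subset _ _, ?_,
          insert a0 Cs, hcross, hCs.trans (Finset.subset_insert _ _)⟩
        · intro x hx
          exact Finset.mem_erase.2 ⟨fun he => hmS' (he ▸ hGS' hx), hG hx⟩
        · rw [Finset.card_erase_of_mem hmF]
          have : 0 < F.card := Finset.card_pos.2 ⟨m, hmF⟩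
          omega
      · have hEB : Before L2 E F := by
          rcases before_append_right_elim hEbef with hEA | hEbefB
          · exfalso
            obtain ⟨C', hC', rfl⟩ := List.mem_map.1 hEA
            apply hGS'
            intro x hx
            rcases Finset.mem_insert.1 (hGE hx) with h' | h'
            · exact absurd (h' ▸ hG hx) ha0F
            · exact hsubS' C' hC' h'
          · exact before_filter_elim hEbefB
        obtain ⟨H, h1, h2, h3, E2, hbef2, h4⟩ :=
          forall_before_of_isShelling hL2 F hFL2 G hG ⟨E, hEB, hGE⟩
        have hHnS' : ¬ H ⊆ S.filter (a0 < ·) := fun hc => hGS' (h1.trans hc)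
        have hE2nS' : ¬ E2 ⊆ S.filter (a0 < ·) := fun hc => hHnS' (h4.trans hc)
        have hE2L2 : E2 ∈ L2 := hbef2.mem_left
        refine ⟨H, h1, h2, h3, E2, before_append_right
          (before_filter hbef2 (decide_eq_true hE2nS') (decide_eq_true hFnS')), h4⟩

end Stmt14Aux

/-- Every interval order is shellable: the order complex of a finite `(2+2)`-free poset is
shellable. -/
theorem stmt14 {P : Type*} [Fintype P] [PartialOrder P] [DecidableEq P]
    (h : TwoPlusTwoFree P) :
    Shellable (orderComplexOn (Finset.univ : Finset P)) :=
  Stmt14Aux.shellable_on h Finset.univ
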